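/- arXiv:2511.02232 — 12 statements merged into one kernel-verified Lean document; each statement's English description precedes it below -/
import Mathlib

section
/- Let α, β, γ be quaternions. There exists a unique quaternion χ satisfying α·χ − χ·β = γ if and only if α and β are not similar, i.e., there is no unit quaternion ω with β = (star ω)·α·ω. -/
/-- A quaternion `ω` is a unit quaternion if `‖ω‖ = 1`; two quaternions `ξ`, `η`
are similar if `η = star ω * ξ * ω` for some unit quaternion `ω`. -/
def QSimilar (ξ η : Quaternion ℝ) : Prop :=
  ∃ ω : Quaternion ℝ, ‖ω‖ = 1 ∧ η = star ω * ξ * ω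

/-- The Sylvester operator as a linear map. -/
noncomputable def sylL (α β : Quaternion ℝ) : Quaternion ℝ →ₗ[ℝ] Quaternion ℝ where
  toFun χ := α * χ - χ * β
  map_add' x y := by noncomm_ring
  map_smul' c x := by
    simp [Algebra.mul_smul_comm, Algebra.smul_mul_assoc, smul_sub]

lemma qsimilar_iff_exists (α β : Quaternion ℝ) :
    QSimilar α β ↔ ∃ χ : Quaternion ℝ, χ ≠ 0 ∧ α * χ = χ * β := by
  constructor
  · rintro ⟨ω, hω, rfl⟩
    have hω0 : ω ≠ 0 := by
      intro h; rw [h, norm_zero] at hω; exact one_ne_zero hω.symm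
    refine ⟨ω, hω0, ?_⟩
    have h1 : ω * star ω = 1 := by
      rw [Quaternion.self_mul_star, Quaternion.normSq_eq_norm_mul_self, hω]
      norm_num
    calc α * ω = 1 * α * ω := by noncomm_ring
      _ = ω * star ω * α * ω := by rw [h1]
      _ = ω * (star ω * α * ω) := by noncomm_ring
  · rintro ⟨χ, hχ0, hχ⟩
    have hn : ‖χ‖ ≠ 0 := norm_ne_zero_iff.mpr hχ0
    refine ⟨(‖χ‖⁻¹ : ℝ) • χ, ?_, ?_⟩
    · rw [norm_smul, norm_inv, norm_norm, inv_mul_cancel₀ hn]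
    · have hs : star χ * χ = ((‖χ‖ * ‖χ‖ : ℝ) : Quaternion ℝ) := by
        rw [Quaternion.star_mul_self, Quaternion.normSq_eq_norm_mul_self]
      have : star ((‖χ‖⁻¹ : ℝ) • χ) * α * ((‖χ‖⁻¹ : ℝ) • χ)
          = (‖χ‖⁻¹ * ‖χ‖⁻¹ : ℝ) • (star χ * α * χ) := by
        rw [Quaternion.star_smul]
        simp [Algebra.smul_mul_assoc, Algebra.mul_smul_comm, smul_smul, mul_comm]
      rw [this, show star χ * α * χ = star χ * (α * χ) by noncomm_ring, hχ,
        show star χ * (χ * β) = star χ * χ * β by noncomm_ring, hs]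
      rw [Quaternion.coe_mul_eq_smul, smul_smul]
      rw [show (‖χ‖⁻¹ * ‖χ‖⁻¹) * (‖χ‖ * ‖χ‖) = 1 by field_simp, one_smul]

lemma sylL_injective_iff (α β : Quaternion ℝ) :
    Function.Injective (sylL α β) ↔ ¬ QSimilar α β := by
  rw [qsimilar_iff_exists]
  constructor
  · rintro hinj ⟨χ, hχ0, hχ⟩
    apply hχ0
    have : sylL α β χ = sylL α β 0 := by
      simp [sylL, sub_eq_zero, hχ]
    exact hinj this
  · intro h
    rw [injective_iff_map_eq_zero]
    intro χ hχ
    by_contra hχ0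
    exact h ⟨χ, hχ0, sub_eq_zero.mp hχ⟩

/-- The scalar Sylvester equation `α * χ - χ * β = γ` has a unique solution
if and only if `α` and `β` are not similar. -/
theorem scalar_sylvester_unique_iff_not_similar (α β γ : Quaternion ℝ) :
    (∃! χ : Quaternion ℝ, α * χ - χ * β = γ) ↔ ¬ QSimilar α β := by
  rw [← sylL_injective_iff]
  constructor
  · rintro ⟨χ, hχ, huniq⟩ x y hxy
    have hx : sylL α β (χ + x - y) = γ := by
      simp only [map_sub, map_add, hxy]
      simpa [sylL] using hχ
    have := huniq _ hx
    rwa [add_sub_assoc, add_eq_left, sub_eq_zero] at this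
  · intro hinj
    have hsurj : Function.Surjective (sylL α β) :=
      LinearMap.injective_iff_surjective.mp hinj
    obtain ⟨χ, hχ⟩ := hsurj γ
    refine ⟨χ, by simpa [sylL] using hχ, fun y hy => hinj ?_⟩
    show sylL α β y = sylL α β χ
    rw [hχ]; exact hy
end

section
/- Let α and β be complex numbers, regarded as quaternions, with α ≠ β and α ≠ conj β, and let γ₁, γ₂ be complex numbers. Set γ = γ₁ + γ₂·j. Then the quaternion χ = γ₁/(α − β) + (γ₂/(α − conj β))·j is the unique quaternion satisfying α·χ − χ·β = γ. -/
/-- The standard embedding of `ℂ` into the quaternions. -/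
noncomputable def cq (z : ℂ) : Quaternion ℝ := ⟨z.re, z.im, 0, 0⟩

/-- The quaternion basis element `j`. -/
noncomputable def qj : Quaternion ℝ := ⟨0, 0, 1, 0⟩

lemma key (α β z w : ℂ) :
    cq α * (cq z + cq w * qj) - (cq z + cq w * qj) * cq β
      = cq ((α - β) * z) + cq ((α - (starRingEnd ℂ) β) * w) * qj := by
  ext <;>
    simp only [Quaternion.re_mul, Quaternion.imI_mul, Quaternion.imJ_mul, Quaternion.imK_mul, Quaternion.re_add, Quaternion.imI_add, Quaternion.imJ_add, Quaternion.imK_add, Quaternion.re_sub, Quaternion.imI_sub, Quaternion.imJ_sub, Quaternion.imK_sub] <;>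
    simp [cq, qj, Complex.mul_re, Complex.mul_im, Complex.sub_re, Complex.sub_im,
      Complex.conj_re, Complex.conj_im] <;> ring

lemma decomp (q : Quaternion ℝ) :
    q = cq ⟨q.re, q.imI⟩ + cq ⟨q.imJ, q.imK⟩ * qj := by
  ext <;> simp only [Quaternion.re_mul, Quaternion.imI_mul, Quaternion.imJ_mul, Quaternion.imK_mul, Quaternion.re_add, Quaternion.imI_add, Quaternion.imJ_add, Quaternion.imK_add] <;> simp [cq, qj]

lemma inj (z w z' w' : ℂ) (h : cq z + cq w * qj = cq z' + cq w' * qj) :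
    z = z' ∧ w = w' := by
  have h1 := congrArg QuaternionAlgebra.re h
  have h2 := congrArg QuaternionAlgebra.imI h
  have h3 := congrArg QuaternionAlgebra.imJ h
  have h4 := congrArg QuaternionAlgebra.imK h
  simp only [Quaternion.re_mul, Quaternion.imI_mul, Quaternion.imJ_mul, Quaternion.imK_mul, Quaternion.re_add, Quaternion.imI_add, Quaternion.imJ_add, Quaternion.imK_add] at h1 h2 h3 h4
  simp [cq, qj] at h1 h2 h3 h4
  exact ⟨Complex.ext h1 h2, Complex.ext h3 h4⟩

/-- For complex `α ≠ β`, `α ≠ conj β` and `γ = γ₁ + γ₂ j`, the quaternion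
`χ = γ₁/(α-β) + (γ₂/(α - conj β)) j` is the unique solution of
`α χ - χ β = γ`. -/
theorem scalar_sylvester_solution (α β γ₁ γ₂ : ℂ)
    (h1 : α ≠ β) (h2 : α ≠ (starRingEnd ℂ) β) :
    cq α * (cq (γ₁ / (α - β)) + cq (γ₂ / (α - (starRingEnd ℂ) β)) * qj)
        - (cq (γ₁ / (α - β)) + cq (γ₂ / (α - (starRingEnd ℂ) β)) * qj) * cq β
      = cq γ₁ + cq γ₂ * qj ∧
    ∀ χ' : Quaternion ℝ, cq α * χ' - χ' * cq β = cq γ₁ + cq γ₂ * qj →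
      χ' = cq (γ₁ / (α - β)) + cq (γ₂ / (α - (starRingEnd ℂ) β)) * qj := by
  have hb : α - β ≠ 0 := sub_ne_zero.mpr h1
  have hcb : α - (starRingEnd ℂ) β ≠ 0 := sub_ne_zero.mpr h2
  constructor
  · rw [key]
    rw [mul_div_cancel₀ _ hb, mul_div_cancel₀ _ hcb]
  · intro χ' hχ
    rw [decomp χ', key] at hχ
    obtain ⟨e1, e2⟩ := inj _ _ _ _ hχ
    rw [decomp χ', ← e1, ← e2, mul_div_cancel_left₀ _ hb, mul_div_cancel_left₀ _ hcb]
end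

section
/- For every quaternion ξ there exists a unit quaternion ω such that the quaternion (star ω)·ξ·ω has j-component zero, k-component zero, and nonnegative i-component; that is, every quaternion is similar to a complex number lying in the closed upper half-plane. -/
open Quaternion

private lemma norm_sq_eq (p : Quaternion ℝ) : ‖p‖ ^ 2 = Quaternion.normSq p := by
  rw [sq, ← Quaternion.normSq_eq_norm_mul_self]


/-- Every quaternion is similar (via a unit quaternion) to a complex number in
the closed upper half-plane: `star ω * ξ * ω` has zero `j`- and `k`-components
and nonnegative `i`-component. -/
theorem quaternion_standardization (ξ : Quaternion ℝ) :
    ∃ ω : Quaternion ℝ, ‖ω‖ = 1 ∧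
      (star ω * ξ * ω).imJ = 0 ∧ (star ω * ξ * ω).imK = 0 ∧
      0 ≤ (star ω * ξ * ω).imI := by
  obtain ⟨a, b, c, d⟩ := ξ
  set x : Quaternion ℝ := ⟨a, b, c, d⟩ with hx
  by_cases h : c = 0 ∧ d = 0
  · obtain ⟨rfl, rfl⟩ := h
    rcases le_or_gt 0 b with hb | hb
    · refine ⟨1, norm_one, ?_, ?_, ?_⟩ <;>
        simp [Quaternion.imJ_mul, Quaternion.imK_mul, Quaternion.imI_mul, hb] <;> simp [hx, hb]
    · set j : Quaternion ℝ := ⟨0, 0, 1, 0⟩ with hj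
      refine ⟨j, ?_, ?_, ?_, ?_⟩
      · have h1 : ‖j‖ ^ 2 = 1 := by
          rw [norm_sq_eq, Quaternion.normSq_def']; simp [Quaternion.normSq_def', hj]
        nlinarith [norm_nonneg j]
      · simp only [Quaternion.re_mul, Quaternion.imI_mul, Quaternion.imJ_mul, Quaternion.imK_mul, Quaternion.re_star, Quaternion.imI_star, Quaternion.imJ_star, Quaternion.imK_star]
        simp [Quaternion.imJ_mul, hj, QuaternionAlgebra.star_mk, hx]
      · simp only [Quaternion.re_mul, Quaternion.imI_mul, Quaternion.imJ_mul, Quaternion.imK_mul, Quaternion.re_star, Quaternion.imI_star, Quaternion.imJ_star, Quaternion.imK_star]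
        simp [Quaternion.imK_mul, hj, QuaternionAlgebra.star_mk, hx]
      · simp only [Quaternion.re_mul, Quaternion.imI_mul, Quaternion.imJ_mul, Quaternion.imK_mul, Quaternion.re_star, Quaternion.imI_star, Quaternion.imJ_star, Quaternion.imK_star]
        simp [Quaternion.imI_mul, Quaternion.imJ_mul, Quaternion.imK_mul,
          Quaternion.re_mul, hj, QuaternionAlgebra.star_mk, hx]
        linarith
  · set r := Real.sqrt (b ^ 2 + c ^ 2 + d ^ 2) with hrdef
    have hr0 : 0 ≤ r := Real.sqrt_nonneg _
    have hr2 : r ^ 2 = b ^ 2 + c ^ 2 + d ^ 2 := Real.sq_sqrt (by positivity)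
    have hcd : 0 < c ^ 2 + d ^ 2 := by
      rcases not_and_or.mp h with hc | hd
      · positivity
      · positivity
    have hrb : 0 < r + b := by nlinarith
    have hrpos : 0 < r := by nlinarith
    set p : Quaternion ℝ := ⟨r + b, 0, -d, c⟩ with hpdef
    set n : ℝ := ‖p‖ with hndef
    have hn2 : n ^ 2 = 2 * r * (r + b) := by
      rw [hndef, norm_sq_eq, Quaternion.normSq_def']
      simp [Quaternion.normSq_def', hpdef]
      nlinarith
    have hn0 : 0 < n := by
      have : 0 < n ^ 2 := by rw [hn2]; positivity
      cases' (norm_nonneg p).lt_or_eq with h' h'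
      · exact h'
      · exfalso; rw [hndef, ← h'] at this; simp at this
    set ω : Quaternion ℝ := n⁻¹ • p with hω
    have key : star p * x * p
        = (2 * r * (r + b)) • (⟨a, r, 0, 0⟩ : Quaternion ℝ) := by
      ext
      · simp only [Quaternion.re_mul, Quaternion.imI_mul, Quaternion.imJ_mul, Quaternion.imK_mul, Quaternion.re_star, Quaternion.imI_star, Quaternion.imJ_star, Quaternion.imK_star]
        simp [Quaternion.re_mul, Quaternion.imI_mul, Quaternion.imJ_mul, Quaternion.imK_mul,
          hpdef, QuaternionAlgebra.star_mk, hx]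
        linear_combination (-a) * hr2
      · simp only [Quaternion.re_mul, Quaternion.imI_mul, Quaternion.imJ_mul, Quaternion.imK_mul, Quaternion.re_star, Quaternion.imI_star, Quaternion.imJ_star, Quaternion.imK_star]
        simp [Quaternion.re_mul, Quaternion.imI_mul, Quaternion.imJ_mul, Quaternion.imK_mul,
          hpdef, QuaternionAlgebra.star_mk, hx]
        linear_combination (-(b + 2 * r)) * hr2
      · simp only [Quaternion.re_mul, Quaternion.imI_mul, Quaternion.imJ_mul, Quaternion.imK_mul, Quaternion.re_star, Quaternion.imI_star, Quaternion.imJ_star, Quaternion.imK_star]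
        simp [Quaternion.re_mul, Quaternion.imI_mul, Quaternion.imJ_mul, Quaternion.imK_mul,
          hpdef, QuaternionAlgebra.star_mk, hx]
        linear_combination c * hr2
      · simp only [Quaternion.re_mul, Quaternion.imI_mul, Quaternion.imJ_mul, Quaternion.imK_mul, Quaternion.re_star, Quaternion.imI_star, Quaternion.imJ_star, Quaternion.imK_star]
        simp [Quaternion.re_mul, Quaternion.imI_mul, Quaternion.imJ_mul, Quaternion.imK_mul,
          hpdef, QuaternionAlgebra.star_mk, hx]
        linear_combination d * hr2
    have hsplit : star ω * x * ω
        = (n⁻¹ * n⁻¹) • (star p * x * p) := by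
      rw [hω, Quaternion.star_smul, smul_mul_assoc, smul_mul_assoc, mul_smul_comm, smul_smul]
    have hfinal : star ω * x * ω = (⟨a, r, 0, 0⟩ : Quaternion ℝ) := by
      rw [hsplit, key]; erw [smul_smul]
      have : n⁻¹ * n⁻¹ * (2 * r * (r + b)) = 1 := by
        field_simp
        nlinarith [hn2]
      erw [this, one_smul]
    refine ⟨ω, ?_, ?_, ?_, ?_⟩
    · rw [hω, norm_smul, ← hndef]
      simp [abs_of_pos hn0, inv_mul_cancel₀ hn0.ne']
    · rw [hfinal]
    · rw [hfinal]
    · rw [hfinal]; exact hr0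
end

section
/- Let a and b be complex numbers with nonnegative imaginary parts, regarded as quaternions. If there exists a unit quaternion ω such that b = (star ω)·a·ω, then a = b; that is, the similarity class of any quaternion contains at most one complex number in the closed upper half-plane. -/
/-- The similarity class of a quaternion contains at most one complex number in
the closed upper half-plane. -/
theorem standard_eigenvalue_unique (a b : ℂ) (ha : 0 ≤ a.im) (hb : 0 ≤ b.im)
    (h : ∃ ω : Quaternion ℝ, ‖ω‖ = 1 ∧ cq b = star ω * cq a * ω) : a = b := by
  obtain ⟨ω, hω, heq⟩ := h
  have hns : Quaternion.normSq ω = 1 := by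
    rw [Quaternion.normSq_eq_norm_mul_self, hω]; ring
  -- real parts equal
  have hre : b.re = a.re := by
    have := congrArg QuaternionAlgebra.re heq
    simp only [Quaternion.re_mul, Quaternion.imI_mul, Quaternion.imJ_mul,
      Quaternion.imK_mul, Quaternion.re_star, Quaternion.imI_star,
      Quaternion.imJ_star, Quaternion.imK_star] at this
    simp only [cq] at this
    have hns' : ω.re * ω.re + ω.imI * ω.imI + ω.imJ * ω.imJ + ω.imK * ω.imK = 1 := by
      have := hns
      rw [Quaternion.normSq_def'] at this
      nlinarith [this]
    linear_combination this + a.re * hns'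
  -- norms equal
  have hnorm : ‖cq b‖ = ‖cq a‖ := by
    rw [heq]
    rw [norm_mul, norm_mul, norm_star, hω]
    ring
  have him2 : b.im ^ 2 = a.im ^ 2 := by
    have h2 : ‖cq b‖ ^ 2 = ‖cq a‖ ^ 2 := by rw [hnorm]
    have hb2 : ∀ z : ℂ, ‖cq z‖ ^ 2 = z.re ^ 2 + z.im ^ 2 := by
      intro z
      rw [sq, ← Quaternion.normSq_eq_norm_mul_self, Quaternion.normSq_def']
      simp only [cq]
      ring
    rw [hb2, hb2, hre] at h2
    linarith
  have him : b.im = a.im := by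
    nlinarith [him2]
  exact Complex.ext hre.symm him.symm
end

section
/- Let α and β be complex numbers, regarded as quaternions. Then α and β are similar as quaternions (i.e., there exists a unit quaternion ω with β = (star ω)·α·ω) if and only if β = α or β = conj α. -/
/-- Two complex numbers, regarded as quaternions, are similar via a unit
quaternion if and only if they are equal or complex conjugates. -/
theorem complex_similar_iff (α β : ℂ) :
    (∃ ω : Quaternion ℝ, ‖ω‖ = 1 ∧ cq β = star ω * cq α * ω) ↔
      β = α ∨ β = (starRingEnd ℂ) α := by
  constructor
  · rintro ⟨ω, hω, h⟩
    have hn : Quaternion.normSq ω = 1 := by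
      rw [Quaternion.normSq_eq_norm_mul_self, hω]; ring
    rw [Quaternion.normSq_def'] at hn
    have hnorm : ‖cq β‖ = ‖cq α‖ := by
      rw [h, norm_mul, norm_mul, Quaternion.norm_star, hω]; ring
    have hns : Quaternion.normSq (cq β) = Quaternion.normSq (cq α) := by
      rw [Quaternion.normSq_eq_norm_mul_self, Quaternion.normSq_eq_norm_mul_self, hnorm]
    rw [Quaternion.normSq_def', Quaternion.normSq_def'] at hns
    simp only [cq] at hns
    have h1 := congrArg QuaternionAlgebra.re h
    simp [Quaternion.re_mul, Quaternion.imI_mul, Quaternion.imJ_mul, Quaternion.imK_mul] at h1; simp [cq] at h1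
    have hre : β.re = α.re := by linear_combination h1 + α.re * hn
    have him : (β.im - α.im) * (β.im + α.im) = 0 := by
      linear_combination hns - (β.re + α.re) * hre
    rcases mul_eq_zero.1 him with h' | h'
    · left; exact Complex.ext hre (by linarith)
    · right; exact Complex.ext hre (by simp; linarith)
  · rintro (rfl | rfl)
    · exact ⟨1, by simp, by simp⟩
    · set q : Quaternion ℝ := ⟨0,0,1,0⟩ with hq
      refine ⟨q, ?_, ?_⟩
      · have h : Quaternion.normSq q = 1 := by
          rw [Quaternion.normSq_def']; simp [hq]
        rw [Quaternion.normSq_eq_norm_mul_self] at h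
        nlinarith [norm_nonneg q]
      · ext <;> simp [Quaternion.re_mul, Quaternion.imI_mul, Quaternion.imJ_mul, Quaternion.imK_mul] <;> simp [hq, cq]
end

section
/- Let T be an n×n upper triangular quaternion matrix whose diagonal entries are complex numbers (regarded as quaternions), and let λ be a complex number such that for every index i, λ ≠ T i i and conj λ ≠ T i i. Then for every vector b of quaternions there exists a unique vector x of quaternions satisfying T·x − (fun i => x i · λ) = b, where T·x denotes the matrix–vector product (fun i => ∑ j, T i j · x j). -/
lemma cq_key (c l : ℂ) (h1 : l ≠ c) (h2 : (starRingEnd ℂ) l ≠ c)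
    (q : Quaternion ℝ) (h : cq c * q = q * cq l) : q = 0 := by
  set p := c.re; set s := c.im; set t := l.re; set w := l.im
  rw [Ne, Complex.ext_iff, not_and_or] at h1 h2
  simp only [Complex.conj_re, Complex.conj_im] at h2
  have hD1 : (p - t) ^ 2 + (s - w) ^ 2 ≠ 0 := by
    intro hc
    have h3 : t = p := by nlinarith [sq_nonneg (p - t), sq_nonneg (s - w)]
    have h4 : w = s := by nlinarith [sq_nonneg (p - t), sq_nonneg (s - w)]
    rcases h1 with h | h <;> [exact h h3; exact h h4]
  have hD2 : (p - t) ^ 2 + (s + w) ^ 2 ≠ 0 := by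
    intro hc
    have h3 : t = p := by nlinarith [sq_nonneg (p - t), sq_nonneg (s + w)]
    have h4 : -w = s := by nlinarith [sq_nonneg (p - t), sq_nonneg (s + w)]
    rcases h2 with h | h <;> [exact h h3; exact h h4]
  rw [Quaternion.ext_iff] at h
  obtain ⟨e1, e2, e3, e4⟩ := h
  simp only [Quaternion.re_mul, Quaternion.imI_mul, Quaternion.imJ_mul,
    Quaternion.imK_mul] at e1 e2 e3 e4
  simp only [cq] at e1 e2 e3 e4
  have ha : q.re * ((p - t) ^ 2 + (s - w) ^ 2) = 0 := by
    linear_combination (p - t) * e1 + (s - w) * e2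
  have hb : q.imI * ((p - t) ^ 2 + (s - w) ^ 2) = 0 := by
    linear_combination (p - t) * e2 - (s - w) * e1
  have hu : q.imJ * ((p - t) ^ 2 + (s + w) ^ 2) = 0 := by
    linear_combination (p - t) * e3 + (s + w) * e4
  have hv : q.imK * ((p - t) ^ 2 + (s + w) ^ 2) = 0 := by
    linear_combination (p - t) * e4 - (s + w) * e3
  rw [Quaternion.ext_iff]
  refine ⟨?_, ?_, ?_, ?_⟩ <;> simp only [Quaternion.re_zero, Quaternion.imI_zero,
    Quaternion.imJ_zero, Quaternion.imK_zero]
  · exact (mul_eq_zero.mp ha).resolve_right hD1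
  · exact (mul_eq_zero.mp hb).resolve_right hD1
  · exact (mul_eq_zero.mp hu).resolve_right hD2
  · exact (mul_eq_zero.mp hv).resolve_right hD2

/-- The upper triangular quaternion Sylvester equation `T x - x λ = b`, with
complex diagonal entries `d i` and complex `λ` such that `λ ≠ d i` and
`conj λ ≠ d i` for all `i`, has a unique solution for every right-hand side. -/
theorem triangular_sylvester_unique {n : ℕ} (T : Matrix (Fin n) (Fin n) (Quaternion ℝ))
    (hupper : ∀ i j, j < i → T i j = 0)
    (d : Fin n → ℂ) (hd : ∀ i, T i i = cq (d i))
    (lam : ℂ) (hlam : ∀ i, lam ≠ d i ∧ (starRingEnd ℂ) lam ≠ d i)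
    (b : Fin n → Quaternion ℝ) :
    ∃! x : Fin n → Quaternion ℝ,
      ((fun i => ∑ j, T i j * x j) - fun i => x i * cq lam) = b := by
  set f : (Fin n → Quaternion ℝ) →ₗ[ℝ] (Fin n → Quaternion ℝ) :=
    { toFun := fun x => ((fun i => ∑ j, T i j * x j) - fun i => x i * cq lam)
      map_add' := by
        intro x y
        funext i
        simp [Pi.sub_apply, mul_add, add_mul, Finset.sum_add_distrib]
        abel
      map_smul' := by
        intro r x
        funext i
        simp [Pi.sub_apply, Finset.smul_sum, mul_smul_comm, smul_mul_assoc, smul_sub] } with hf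
  have hinj : Function.Injective f := by
    rw [← LinearMap.ker_eq_bot, LinearMap.ker_eq_bot']
    intro x hx
    have hx' : ∀ i, (∑ j, T i j * x j) - x i * cq lam = 0 := by
      intro i
      have := congrFun hx i
      simp only [hf, LinearMap.coe_mk, AddHom.coe_mk, Pi.sub_apply] at this; simpa using this
    have H : ∀ k : ℕ, ∀ i : Fin n, n ≤ k + (i : ℕ) → x i = 0 := by
      intro k
      induction k with
      | zero => intro i hi; exact absurd hi (by simpa using i.isLt.not_le)
      | succ k ih =>
        intro i hi
        have hsum : (∑ j, T i j * x j) = T i i * x i := by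
          apply Finset.sum_eq_single
          · intro j _ hji
            rcases lt_or_gt_of_ne hji with hj | hj
            · rw [hupper i j hj, zero_mul]
            · rw [ih j (by omega), mul_zero]
          · intro hii; exact absurd (Finset.mem_univ i) hii
        have heq : cq (d i) * x i = x i * cq lam := by
          have h0 := hx' i
          rw [hsum, hd i] at h0
          exact sub_eq_zero.mp h0
        exact cq_key (d i) lam (hlam i).1 (hlam i).2 (x i) heq
    funext i
    exact H n i (by omega)
  have hsurj : Function.Surjective f := (LinearMap.injective_iff_surjective).mp hinj
  obtain ⟨x, hxb⟩ := hsurj b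
  refine ⟨x, ?_, ?_⟩
  · simpa [hf] using hxb
  · intro y hy
    apply hinj
    show f y = f x
    have hfx : f x = b := hxb
    rw [hfx]
    simpa [hf] using hy
end

section
/- Let T be an n×n upper triangular quaternion matrix whose diagonal entries are complex numbers (regarded as quaternions), and let λ be a complex number. If there exists a nonzero quaternion vector x with T·x = (fun i => x i · λ), then there exists an index i such that λ = T i i or λ = conj (T i i) (as complex numbers). -/
lemma cq_key_s9 (z w : ℂ) (q : Quaternion ℝ) (hq : q ≠ 0) (h : cq z * q = q * cq w) :
    w = z ∨ w = (starRingEnd ℂ) z := by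
  have h1 := congrArg QuaternionAlgebra.re h
  have h2 := congrArg QuaternionAlgebra.imI h
  have h3 := congrArg QuaternionAlgebra.imJ h
  have h4 := congrArg QuaternionAlgebra.imK h
  simp only [Quaternion.re_mul, Quaternion.imI_mul, Quaternion.imJ_mul,
    Quaternion.imK_mul] at h1 h2 h3 h4
  simp only [cq] at h1 h2 h3 h4
  by_cases hc : q.re = 0 ∧ q.imI = 0
  · right
    obtain ⟨e1, e2⟩ := hc
    have hc2 : ¬ (q.imJ = 0 ∧ q.imK = 0) := by
      intro ⟨e3, e4⟩
      exact hq (by ext <;> simp_all <;> rfl)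
    have hs : 0 < q.imJ ^ 2 + q.imK ^ 2 := by
      rcases (not_and_or.mp hc2) with h5 | h5 <;> positivity
    have f1 : (z.re - w.re) * q.imJ - (z.im + w.im) * q.imK = 0 := by linear_combination h3
    have f2 : (z.re - w.re) * q.imK + (z.im + w.im) * q.imJ = 0 := by linear_combination h4
    have g1 : (z.re - w.re) * (q.imJ ^ 2 + q.imK ^ 2) = 0 := by
      linear_combination q.imJ * f1 + q.imK * f2
    have g2 : (z.im + w.im) * (q.imJ ^ 2 + q.imK ^ 2) = 0 := by
      linear_combination q.imJ * f2 - q.imK * f1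
    have hre : w.re = z.re := by
      rcases mul_eq_zero.mp g1 with h' | h'
      · linarith
      · exact absurd h' hs.ne'
    have him : w.im = -z.im := by
      rcases mul_eq_zero.mp g2 with h' | h'
      · linarith
      · exact absurd h' hs.ne'
    exact Complex.ext (by simpa using hre) (by simpa using him)
  · left
    have hs : 0 < q.re ^ 2 + q.imI ^ 2 := by
      rcases (not_and_or.mp hc) with h5 | h5 <;> positivity
    have f1 : (z.re - w.re) * q.re - (z.im - w.im) * q.imI = 0 := by linear_combination h1
    have f2 : (z.re - w.re) * q.imI + (z.im - w.im) * q.re = 0 := by linear_combination h2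
    have g1 : (z.re - w.re) * (q.re ^ 2 + q.imI ^ 2) = 0 := by
      linear_combination q.re * f1 + q.imI * f2
    have g2 : (z.im - w.im) * (q.re ^ 2 + q.imI ^ 2) = 0 := by
      linear_combination q.re * f2 - q.imI * f1
    have hre : w.re = z.re := by
      rcases mul_eq_zero.mp g1 with h' | h'
      · linarith
      · exact absurd h' hs.ne'
    have him : w.im = z.im := by
      rcases mul_eq_zero.mp g2 with h' | h'
      · linarith
      · exact absurd h' hs.ne'
    exact Complex.ext hre him

/-- If a complex number `λ` is a right eigenvalue of an upper triangular
quaternion matrix with complex diagonal entries `d i`, then `λ = d i` or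
`λ = conj (d i)` for some index `i`. -/
theorem triangular_eigenvalue_diag {n : ℕ} (T : Matrix (Fin n) (Fin n) (Quaternion ℝ))
    (hupper : ∀ i j, j < i → T i j = 0)
    (d : Fin n → ℂ) (hd : ∀ i, T i i = cq (d i))
    (lam : ℂ) (x : Fin n → Quaternion ℝ) (hx : x ≠ 0)
    (h : (fun i => ∑ j, T i j * x j) = fun i => x i * cq lam) :
    ∃ i, lam = d i ∨ lam = (starRingEnd ℂ) (d i) := by
  classical
  set S : Finset (Fin n) := Finset.univ.filter (fun i => x i ≠ 0) with hS
  have hSne : S.Nonempty := by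
    obtain ⟨i, hi⟩ := Function.ne_iff.mp hx
    exact ⟨i, by simpa [hS] using hi⟩
  set i := S.max' hSne with hi
  have hxi : x i ≠ 0 := by
    have := S.max'_mem hSne
    simpa [hS] using this
  have hgt : ∀ j, i < j → x j = 0 := by
    intro j hj
    by_contra hxj
    have : j ∈ S := by simp [hS, hxj]
    exact absurd (S.le_max' j this) (not_le.mpr hj)
  have hrow := congrFun h i
  have hsum : ∑ j, T i j * x j = T i i * x i := by
    apply Finset.sum_eq_single
    · intro j _ hij
      rcases lt_or_gt_of_ne hij with hlt | hlt
      · rw [hupper i j hlt, zero_mul]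
      · rw [hgt j hlt, mul_zero]
    · simp
  rw [hsum, hd] at hrow
  obtain h' | h' := cq_key_s9 (d i) lam (x i) hxi hrow
  · exact ⟨i, Or.inl h'⟩
  · exact ⟨i, Or.inr h'⟩
end

section
/- Let T be an n×n upper triangular quaternion matrix whose diagonal entries are complex numbers (regarded as quaternions) that are pairwise non-similar, i.e., for all indices i ≠ j, T i i ≠ T j j and T i i ≠ conj (T j j). Then there exists an upper triangular quaternion matrix X with all diagonal entries equal to 1 such that T·X = X·D, where D is the diagonal matrix with D i i = T i i; in particular X is invertible and X⁻¹·T·X is diagonal. -/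
lemma syl_inj (z w : ℂ) (h1 : z ≠ w) (h2 : z ≠ (starRingEnd ℂ) w)
    (x : Quaternion ℝ) (hx : cq z * x - x * cq w = 0) : x = 0 := by
  have he := Quaternion.ext_iff.mp hx
  simp only [Quaternion.re_sub, Quaternion.imI_sub, Quaternion.imJ_sub, Quaternion.imK_sub,
    Quaternion.re_mul, Quaternion.imI_mul, Quaternion.imJ_mul, Quaternion.imK_mul,
    Quaternion.re_zero, Quaternion.imI_zero, Quaternion.imJ_zero, Quaternion.imK_zero] at he
  simp only [cq] at he
  obtain ⟨e1, e2, e3, e4⟩ := he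
  set p := z.re; set q := z.im; set r := w.re; set s := w.im
  have hA : (p - r)^2 + (q - s)^2 ≠ 0 := by
    intro h
    exact h1 (Complex.ext (by nlinarith [sq_nonneg (p - r), sq_nonneg (q - s)])
      (by nlinarith [sq_nonneg (p - r), sq_nonneg (q - s)]))
  have hB : (p - r)^2 + (q + s)^2 ≠ 0 := by
    intro h
    refine h2 (Complex.ext ?_ ?_)
    · simpa using (by nlinarith [sq_nonneg (p - r), sq_nonneg (q + s)] : p = r)
    · simpa using (by nlinarith [sq_nonneg (p - r), sq_nonneg (q + s)] : q = -s)
  have g0 : ((p - r)^2 + (q - s)^2) * x.re = 0 := by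
    linear_combination (p - r) * e1 + (q - s) * e2
  have g1 : ((p - r)^2 + (q - s)^2) * x.imI = 0 := by
    linear_combination (s - q) * e1 + (p - r) * e2
  have g2 : ((p - r)^2 + (q + s)^2) * x.imJ = 0 := by
    linear_combination (p - r) * e3 + (q + s) * e4
  have g3 : ((p - r)^2 + (q + s)^2) * x.imK = 0 := by
    linear_combination (p - r) * e4 - ((q + s)) * e3
  exact Quaternion.ext_iff.mpr ⟨(mul_eq_zero.mp g0).resolve_left hA,
    (mul_eq_zero.mp g1).resolve_left hA,
    (mul_eq_zero.mp g2).resolve_left hB,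
    (mul_eq_zero.mp g3).resolve_left hB⟩

lemma syl_exists (z w : ℂ) (h1 : z ≠ w) (h2 : z ≠ (starRingEnd ℂ) w)
    (c : Quaternion ℝ) : ∃ x : Quaternion ℝ, cq z * x - x * cq w = c := by
  let f : Quaternion ℝ →ₗ[ℝ] Quaternion ℝ :=
    { toFun := fun x => cq z * x - x * cq w
      map_add' := by intro a b; noncomm_ring
      map_smul' := by intro r a; simp [mul_smul_comm, smul_mul_assoc, smul_sub] }
  have hinj : Function.Injective f := by
    rw [← LinearMap.ker_eq_bot, LinearMap.ker_eq_bot']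
    intro x hx
    exact syl_inj z w h1 h2 x hx
  have hsurj := LinearMap.injective_iff_surjective.mp hinj
  obtain ⟨x, hx⟩ := hsurj c
  exact ⟨x, hx⟩

open scoped Classical in
noncomputable def sylSolve (z w : ℂ) (c : Quaternion ℝ) : Quaternion ℝ :=
  if h : ∃ x : Quaternion ℝ, cq z * x - x * cq w = c then h.choose else 0

open scoped Classical in
lemma sylSolve_spec (z w : ℂ) (h1 : z ≠ w) (h2 : z ≠ (starRingEnd ℂ) w)
    (c : Quaternion ℝ) : cq z * sylSolve z w c - sylSolve z w c * cq w = c := by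
  have h := syl_exists z w h1 h2 c
  rw [sylSolve, dif_pos h]
  exact h.choose_spec

noncomputable def Ent {n : ℕ} (T : Matrix (Fin n) (Fin n) (Quaternion ℝ))
    (d : Fin n → ℂ) : ℕ → Fin n → Fin n → Quaternion ℝ
  | m, i, j =>
    if hij : i < j ∧ j.val - i.val = m then
      sylSolve (d i) (d j)
        (-(∑ k : Fin n, if h : i < k then T i k * Ent T d (j.val - k.val) k j else 0))
    else if i = j then 1 else 0
termination_by m => m
decreasing_by
  · obtain ⟨hij1, hij2⟩ := hij
    have h1 : i.val < j.val := hij1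
    have h2 : i.val < k.val := h
    omega

lemma Ent_zero {n : ℕ} (T : Matrix (Fin n) (Fin n) (Quaternion ℝ)) (d : Fin n → ℂ)
    (m : ℕ) (i j : Fin n) (h : j < i) : Ent T d m i j = 0 := by
  rw [Ent]
  rw [dif_neg (by simp [h.not_gt, h.ne']), if_neg h.ne']

lemma Ent_diag {n : ℕ} (T : Matrix (Fin n) (Fin n) (Quaternion ℝ)) (d : Fin n → ℂ)
    (m : ℕ) (i : Fin n) : Ent T d m i i = 1 := by
  rw [Ent]
  rw [dif_neg (by simp), if_pos rfl]

lemma Ent_spec {n : ℕ} (T : Matrix (Fin n) (Fin n) (Quaternion ℝ)) (d : Fin n → ℂ)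
    (hdist : ∀ i j, i ≠ j → d i ≠ d j ∧ d i ≠ (starRingEnd ℂ) (d j))
    (i j : Fin n) (h : i < j) :
    cq (d i) * Ent T d (j.val - i.val) i j - Ent T d (j.val - i.val) i j * cq (d j) =
      -(∑ k : Fin n, if i < k then T i k * Ent T d (j.val - k.val) k j else 0) := by
  conv_lhs => rw [Ent]
  rw [dif_pos ⟨h, rfl⟩]
  obtain ⟨hd1, hd2⟩ := hdist i j h.ne
  rw [sylSolve_spec _ _ hd1 hd2]
  congr 1

lemma strictUpper_pow {n : ℕ} (N : Matrix (Fin n) (Fin n) (Quaternion ℝ))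
    (h : ∀ i j : Fin n, ¬ i < j → N i j = 0) :
    ∀ m (i j : Fin n), j.val < i.val + m → (N ^ m) i j = 0 := by
  intro m
  induction m with
  | zero =>
    intro i j hj
    simp only [pow_zero]
    exact Matrix.one_apply_ne (by intro h'; subst h'; omega)
  | succ m ih =>
    intro i j hj
    rw [pow_succ', Matrix.mul_apply]
    apply Finset.sum_eq_zero
    intro k _
    by_cases hk : i < k
    · rw [ih k j (by have : i.val < k.val := hk; omega), mul_zero]
    · rw [h i k hk, zero_mul]

lemma strictUpper_nilpotent {n : ℕ} (N : Matrix (Fin n) (Fin n) (Quaternion ℝ))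
    (h : ∀ i j : Fin n, ¬ i < j → N i j = 0) : IsNilpotent N := by
  refine ⟨n, ?_⟩
  refine Matrix.ext fun i j => ?_
  rw [strictUpper_pow N h n i j (by omega)]
  rfl

/-- An upper triangular quaternion matrix with pairwise non-similar complex
diagonal entries can be diagonalized by an invertible upper triangular matrix
`X` with unit diagonal: `T * X = X * D` where `D = diagonal (T i i)`. -/
theorem triangular_diagonalization {n : ℕ} (T : Matrix (Fin n) (Fin n) (Quaternion ℝ))
    (hupper : ∀ i j, j < i → T i j = 0)
    (d : Fin n → ℂ) (hd : ∀ i, T i i = cq (d i))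
    (hdist : ∀ i j, i ≠ j → d i ≠ d j ∧ d i ≠ (starRingEnd ℂ) (d j)) :
    ∃ X : Matrix (Fin n) (Fin n) (Quaternion ℝ),
      (∀ i j, j < i → X i j = 0) ∧ (∀ i, X i i = 1) ∧ IsUnit X ∧
      T * X = X * Matrix.diagonal (fun i => T i i) := by
  set X : Matrix (Fin n) (Fin n) (Quaternion ℝ) :=
    fun i j => Ent T d (j.val - i.val) i j with hX
  have hXlow : ∀ i j, j < i → X i j = 0 := fun i j h => Ent_zero T d _ i j h
  have hXdiag : ∀ i, X i i = 1 := fun i => Ent_diag T d _ i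
  refine ⟨X, hXlow, hXdiag, ?_, ?_⟩
  · -- IsUnit
    have hN : ∀ i j : Fin n, ¬ i < j → (X - 1) i j = 0 := by
      intro i j hij
      rcases eq_or_lt_of_le (not_lt.mp hij) with h | h
      · subst h
        simp [Matrix.sub_apply, hXdiag]
      · rw [Matrix.sub_apply, hXlow i j h, Matrix.one_apply_ne h.ne', sub_zero]
    have hnil := strictUpper_nilpotent (X - 1) hN
    have := hnil.isUnit_one_add
    simpa using this
  · refine Matrix.ext fun i j => ?_
    rw [Matrix.mul_apply, Matrix.mul_diagonal]
    have split : ∀ k : Fin n, T i k * X k j =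
        (if k = i then T i i * X i j else 0) + (if i < k then T i k * X k j else 0) := by
      intro k
      rcases lt_trichotomy k i with h | h | h
      · rw [hupper i k h, if_neg h.ne, if_neg (not_lt.mpr h.le), zero_mul, add_zero]
      · subst h; rw [if_pos rfl, if_neg (lt_irrefl k), add_zero]
      · rw [if_neg h.ne', if_pos h, zero_add]
    rw [Finset.sum_congr rfl fun k _ => split k, Finset.sum_add_distrib,
      Finset.sum_ite_eq' Finset.univ i (fun _ => T i i * X i j), if_pos (Finset.mem_univ i)]
    rcases lt_trichotomy j i with h | h | h
    · rw [hXlow i j h, mul_zero, zero_mul, zero_add]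
      apply Finset.sum_eq_zero
      intro k _
      by_cases hk : i < k
      · rw [if_pos hk, hXlow k j (h.trans hk), mul_zero]
      · rw [if_neg hk]
    · subst h
      rw [hXdiag j, mul_one, one_mul]
      have : (∑ k : Fin n, if j < k then T j k * X k j else 0) = 0 := by
        apply Finset.sum_eq_zero
        intro k _
        by_cases hk : j < k
        · rw [if_pos hk, hXlow k j hk, mul_zero]
        · rw [if_neg hk]
      rw [this, add_zero]
    · have spec := Ent_spec T d hdist i j h
      set S := ∑ k : Fin n, if i < k then T i k * X k j else 0 with hS
      have hspec : T i i * X i j - X i j * T j j = -S := by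
        rw [hd i, hd j]
        convert spec using 2
      calc T i i * X i j + S = (T i i * X i j - X i j * T j j) + S + X i j * T j j := by abel
        _ = -S + S + X i j * T j j := by rw [hspec]
        _ = X i j * T j j := by abel
end

section
/- Let T be the 2×2 upper triangular quaternion matrix with entries T 1 1 = t₁₁, T 1 2 = t₁₂, T 2 1 = 0, T 2 2 = t₂₂, where t₁₁ and t₂₂ are complex numbers with nonnegative imaginary parts (regarded as quaternions) and t₁₂ is an arbitrary quaternion. Then there exists a unitary 2×2 quaternion matrix Q (i.e., Qᴴ·Q = I, where Qᴴ is the conjugate transpose) such that Qᴴ·T·Q is the upper triangular matrix with diagonal entries t₂₂, t₁₁ (in that order) and (1,2)-entry equal to t₁₂. -/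
set_option maxHeartbeats 2000000
open Complex
noncomputable section
local notation "conj'" => starRingEnd ℂ

/-- Quaternion built from two complex numbers: `qc α β = α + β·j`. -/
def qc (α β : ℂ) : Quaternion ℝ := ⟨α.re, α.im, β.re, β.im⟩

lemma qc_re (α β : ℂ) : (qc α β).re = α.re := rfl
lemma qc_imI (α β : ℂ) : (qc α β).imI = α.im := rfl
lemma qc_imJ (α β : ℂ) : (qc α β).imJ = β.re := rfl
lemma qc_imK (α β : ℂ) : (qc α β).imK = β.im := rfl

lemma qc_mul (α β γ δ : ℂ) : qc α β * qc γ δ = qc (α*γ - β*conj' δ) (α*δ + β*conj' γ) := by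
  ext <;> simp [qc_re, qc_imI, qc_imJ, qc_imK, Quaternion.re_mul, Quaternion.imI_mul, Quaternion.imJ_mul, Quaternion.imK_mul] <;> ring

lemma qc_star (α β : ℂ) : star (qc α β) = qc (conj' α) (-β) := by ext <;> simp [qc_re, qc_imI, qc_imJ, qc_imK]

lemma qc_add (α β γ δ : ℂ) : qc α β + qc γ δ = qc (α+γ) (β+δ) := by ext <;> simp [qc_re, qc_imI, qc_imJ, qc_imK]

lemma qc_one : qc 1 0 = 1 := by ext <;> simp [qc_re, qc_imI, qc_imJ, qc_imK, Quaternion.re_one, Quaternion.imI_one, Quaternion.imJ_one, Quaternion.imK_one]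

lemma qc_zero : qc 0 0 = 0 := by ext <;> simp [qc_re, qc_imI, qc_imJ, qc_imK, Quaternion.re_zero, Quaternion.imI_zero, Quaternion.imJ_zero, Quaternion.imK_zero]

lemma qc_eq_iff {α β γ δ : ℂ} : qc α β = qc γ δ ↔ α = γ ∧ β = δ := by
  constructor
  · intro h
    have h1 := congrArg QuaternionAlgebra.re h
    have h2 := congrArg QuaternionAlgebra.imI h
    have h3 := congrArg QuaternionAlgebra.imJ h
    have h4 := congrArg QuaternionAlgebra.imK h
    simp [qc] at h1 h2 h3 h4
    exact ⟨Complex.ext h1 h2, Complex.ext h3 h4⟩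
  · rintro ⟨rfl, rfl⟩; rfl

theorem build (a c b1 b2 x1 x2 y1 z w1 w2 : ℂ)
    (h1 : conj' x1 * x1 + x2 * conj' x2 + conj' z * z = 1)
    (h2 : conj' x1 * y1 + conj' z * w1 = 0)
    (h3 : x2 * conj' y1 = conj' z * w2)
    (h4 : conj' y1 * y1 + conj' w1 * w1 + w2 * conj' w2 = 1)
    (h5 : a * x1 + b1 * z = x1 * c)
    (h6 : a * x2 + b2 * conj' z = x2 * conj' c)
    (h7 : b1 * w1 - b2 * conj' w2 = x1 * b1 - x2 * conj' b2)
    (h8 : b1 * w2 + b2 * conj' w1 = x1 * b2 + x2 * conj' b1)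
    (h9 : c * w1 = z * b1 + w1 * a)
    (h10 : c * w2 = z * b2 + w2 * conj' a) :
    ∃ Q : Matrix (Fin 2) (Fin 2) (Quaternion ℝ),
      Q.conjTranspose * Q = 1 ∧
      Q.conjTranspose * !![qc a 0, qc b1 b2; 0, qc c 0] * Q = !![qc c 0, qc b1 b2; 0, qc a 0] := by
  have h2c : x1 * conj' y1 + z * conj' w1 = 0 := by
    have := congrArg conj' h2; simpa using this
  set Q : Matrix (Fin 2) (Fin 2) (Quaternion ℝ) := !![qc x1 x2, qc y1 0; qc z 0, qc w1 w2] with hQ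
  have hU : Q.conjTranspose * Q = 1 := by
    refine Matrix.ext fun i j => ?_
    fin_cases i <;> fin_cases j <;>
      simp [hQ, Matrix.mul_apply, Fin.sum_univ_two, Matrix.conjTranspose_apply, Matrix.one_apply,
        qc_star, qc_mul, qc_add, ← qc_one, ← qc_zero, qc_eq_iff]
    · exact ⟨by linear_combination h1, by ring⟩
    · exact ⟨by linear_combination h2, by linear_combination -h3⟩
    · exact ⟨by linear_combination h2c, by linear_combination h3⟩
    · exact ⟨by linear_combination h4, by ring⟩
  have hC : !![qc a 0, qc b1 b2; 0, qc c 0] * Q = Q * !![qc c 0, qc b1 b2; 0, qc a 0] := by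
    refine Matrix.ext fun i j => ?_
    fin_cases i <;> fin_cases j <;>
      simp [hQ, Matrix.mul_apply, Fin.sum_univ_two, qc_mul, qc_add, ← qc_zero, qc_eq_iff]
    · exact ⟨h5, h6⟩
    · exact ⟨by linear_combination h7, h8⟩
    · ring
    · exact ⟨h9, h10⟩
  refine ⟨Q, hU, ?_⟩
  rw [Matrix.mul_assoc, hC, ← Matrix.mul_assoc, hU, Matrix.one_mul]

lemma exists_z (g : ℂ) (hg : g ≠ 0) (t : ℝ) (ht : t ≠ 0) :
    ∃ z : ℂ, z ≠ 0 ∧ z * conj' z = (t:ℂ)^2 ∧ conj' g * z^2 = -(t:ℂ)^2 * g := by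
  refine ⟨(t:ℂ) * I * g / (‖g‖ : ℝ), ?_, ?_, ?_⟩
  · apply div_ne_zero
    · exact mul_ne_zero (mul_ne_zero (ofReal_ne_zero.mpr ht) I_ne_zero) hg
    · exact_mod_cast (norm_ne_zero_iff.mpr hg)
  · have habs : ((‖g‖ : ℝ) : ℂ) ≠ 0 := by exact_mod_cast (norm_ne_zero_iff.mpr hg)
    have hgg : g * conj' g = ((‖g‖:ℝ):ℂ)^2 := by
      rw [Complex.mul_conj, Complex.normSq_eq_norm_sq]; push_cast; ring
    simp only [map_div₀, map_mul, Complex.conj_ofReal, Complex.conj_I]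
    field_simp
    linear_combination (-(t:ℂ)^2 * I^2) * hgg + (-(t:ℂ)^2 * ((‖g‖:ℝ):ℂ)^2) * Complex.I_sq
  · have habs : ((‖g‖ : ℝ) : ℂ) ≠ 0 := by exact_mod_cast (norm_ne_zero_iff.mpr hg)
    have hgg : g * conj' g = ((‖g‖:ℝ):ℂ)^2 := by
      rw [Complex.mul_conj, Complex.normSq_eq_norm_sq]; push_cast; ring
    field_simp
    linear_combination ((t:ℂ)^2 * I^2) * hgg + ((t:ℂ)^2 * ((‖g‖:ℝ):ℂ)^2) * Complex.I_sq

/-- Eigenvalue swapping: for a 2×2 upper triangular quaternion matrix with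
standardized (complex, upper half-plane) diagonal entries `t₁₁`, `t₂₂`, there
is a unitary `Q` with `Qᴴ T Q` upper triangular with swapped diagonal entries
and the same (1,2)-entry. -/
theorem eigenvalue_swap (t11 t22 : ℂ) (h11 : 0 ≤ t11.im) (h22 : 0 ≤ t22.im)
    (t12 : Quaternion ℝ) :
    ∃ Q : Matrix (Fin 2) (Fin 2) (Quaternion ℝ),
      Q.conjTranspose * Q = 1 ∧
      Q.conjTranspose * !![cq t11, t12; 0, cq t22] * Q
        = !![cq t22, t12; 0, cq t11] := by
  by_cases hac : t11 = t22
  · subst hac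
    exact ⟨1, by simp, by simp⟩
  · set b1 : ℂ := ⟨t12.re, t12.imI⟩ with hb1def
    set b2 : ℂ := ⟨t12.imJ, t12.imK⟩ with hb2def
    have ht12 : t12 = qc b1 b2 := by ext <;> rfl
    have hq11 : cq t11 = qc t11 0 := by ext <;> simp [cq, qc]
    have hq22 : cq t22 = qc t22 0 := by ext <;> simp [cq, qc]
    rw [ht12, hq11, hq22]
    have hd1 : t22 - t11 ≠ 0 := sub_ne_zero.mpr (Ne.symm hac)
    have hd2 : conj' t22 - t11 ≠ 0 := by
      intro h
      have h' : conj' t22 = t11 := sub_eq_zero.mp h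
      have him : t11.im = -t22.im := by rw [← h']; simp
      have h220 : t22.im = 0 := le_antisymm (by linarith) h22
      apply hac
      have hcc : conj' t22 = t22 := Complex.conj_eq_iff_im.mpr h220
      rw [← h', hcc]
    have hd3 : t22 - conj' t11 ≠ 0 := by
      intro h; apply hd2; have := congrArg conj' h; simpa using this
    have hd1c : conj' t22 - conj' t11 ≠ 0 := by
      intro h; apply hd1; have := congrArg conj' h; simpa using this
    by_cases hb1 : b1 = 0
    · -- Case b1 = 0 : the (1,2) entry is b2·j.
      rw [hb1]
      set n2 : ℝ := normSq (conj' t22 - t11) with hn2def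
      set nb2 : ℝ := normSq b2 with hnb2def
      have hn2 : 0 < n2 := normSq_pos.mpr hd2
      have hnb2 : 0 ≤ nb2 := normSq_nonneg b2
      set t : ℝ := Real.sqrt (n2 / (n2 + nb2)) with htdef
      have ht2 : t^2 = n2 / (n2 + nb2) := Real.sq_sqrt (by positivity)
      have htpos : 0 < t := Real.sqrt_pos.mpr (by positivity)
      have hR3 : (t:ℂ)^2 * ((conj' t22 - t11) * (t22 - conj' t11) + b2 * conj' b2)
          = (conj' t22 - t11) * (t22 - conj' t11) := by
        have e2 : (conj' t22 - t11) * (t22 - conj' t11) = (n2:ℂ) := by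
          have : t22 - conj' t11 = conj' (conj' t22 - t11) := by
            rw [map_sub]; simp
          rw [this, Complex.mul_conj, hn2def]
        have e3 : b2 * conj' b2 = (nb2:ℂ) := by rw [Complex.mul_conj, hnb2def]
        rw [e2, e3]
        have h' : t^2 * (n2 + nb2) = n2 := by rw [ht2]; field_simp
        have h'' := congrArg (Complex.ofReal) h'
        push_cast at h''
        linear_combination h''
      refine build t11 t22 0 b2 0 (b2*(t:ℂ)/(conj' t22 - t11))
        ((t:ℂ)*(t22 - conj' t11)/(conj' t22 - t11)) (t:ℂ) 0 ((t:ℂ)*b2/(t22 - conj' t11))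
        ?_ ?_ ?_ ?_ ?_ ?_ ?_ ?_ ?_ ?_
      all_goals try simp only [map_mul, map_div₀, map_sub, map_neg, conj_conj, Complex.conj_ofReal, map_zero]
      all_goals field_simp [hd1, hd2, hd3, hd1c]
      all_goals try ring
      all_goals try linear_combination hR3
    · -- Generic case b1 ≠ 0.
      set n1 : ℝ := normSq (t22 - t11) with hn1def
      set n2 : ℝ := normSq (conj' t22 - t11) with hn2def
      set nb1 : ℝ := normSq b1 with hnb1def
      set nb2 : ℝ := normSq b2 with hnb2def
      have hn1 : 0 < n1 := normSq_pos.mpr hd1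
      have hn2 : 0 < n2 := normSq_pos.mpr hd2
      have hnb1 : 0 < nb1 := normSq_pos.mpr hb1
      have hnb2 : 0 ≤ nb2 := normSq_nonneg b2
      set N : ℝ := n1*n2 + nb1*n2 + nb2*n1 with hNdef
      have hN : 0 < N := by positivity
      set t : ℝ := Real.sqrt (n1*n2 / N) with htdef
      have ht2 : t^2 = n1*n2 / N := Real.sq_sqrt (by positivity)
      have htpos : 0 < t := Real.sqrt_pos.mpr (by positivity)
      have hb1c : conj' b1 ≠ 0 := by
        intro h; apply hb1; have := congrArg conj' h; simpa using this
      have hg : conj' b1 * (t22 - t11) * (t22 - conj' t11) ≠ 0 :=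
        mul_ne_zero (mul_ne_zero hb1c hd1) hd3
      obtain ⟨z, hzne, hz1, hz2⟩ := exists_z _ hg t htpos.ne'
      have hz2p : (b1 * (conj' t22 - conj' t11) * (conj' t22 - t11)) * z^2
          = -(t:ℂ)^2 * (conj' b1 * (t22 - t11) * (t22 - conj' t11)) := by
        have := hz2
        simp only [map_mul, map_sub, conj_conj] at this
        linear_combination this
      have hz2c : (conj' b1 * (t22 - t11) * (t22 - conj' t11)) * (conj' z)^2
          = -(t:ℂ)^2 * (b1 * (conj' t22 - conj' t11) * (conj' t22 - t11)) := by
        have := congrArg conj' hz2p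
        simp only [map_mul, map_sub, map_neg, map_pow, conj_conj, Complex.conj_ofReal] at this
        linear_combination this
      have hkey : b1 * (conj' t22 - conj' t11) * (conj' t22 - t11) * z
          + conj' b1 * (t22 - t11) * (t22 - conj' t11) * conj' z = 0 := by
        apply mul_left_cancel₀ hzne
        rw [mul_zero]
        linear_combination hz2p + (conj' b1 * (t22 - t11) * (t22 - conj' t11)) * hz1
      have hR3 : (t:ℂ)^2 * ((t22 - t11) * (conj' t22 - conj' t11) * ((conj' t22 - t11) * (t22 - conj' t11))
            + b1 * conj' b1 * ((conj' t22 - t11) * (t22 - conj' t11))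
            + b2 * conj' b2 * ((t22 - t11) * (conj' t22 - conj' t11)))
          = (t22 - t11) * (conj' t22 - conj' t11) * ((conj' t22 - t11) * (t22 - conj' t11)) := by
        have e1 : (t22 - t11) * (conj' t22 - conj' t11) = (n1:ℂ) := by
          rw [← map_sub, Complex.mul_conj, hn1def]
        have e2 : (conj' t22 - t11) * (t22 - conj' t11) = (n2:ℂ) := by
          have : t22 - conj' t11 = conj' (conj' t22 - t11) := by rw [map_sub]; simp
          rw [this, Complex.mul_conj, hn2def]
        have e3 : b1 * conj' b1 = (nb1:ℂ) := by rw [Complex.mul_conj, hnb1def]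
        have e4 : b2 * conj' b2 = (nb2:ℝ) := by rw [Complex.mul_conj, hnb2def]
        rw [e1, e2, e3, e4]
        have h' : t^2 * (n1*n2 + nb1*n2 + nb2*n1) = n1*n2 := by rw [ht2]; field_simp [hNdef]; linarith
        have h'' := congrArg (Complex.ofReal) h'
        push_cast at h''
        linear_combination h''
      refine build t11 t22 b1 b2
        (b1 * z / (t22 - t11))
        (b2 * conj' z / (conj' t22 - t11))
        (-(z * b1 * (conj' t22 - conj' t11)) / (conj' b1 * (t22 - t11)))
        z
        (b1 * z / (t22 - t11))
        (z * b2 / (t22 - conj' t11))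
        ?_ ?_ ?_ ?_ ?_ ?_ ?_ ?_ ?_ ?_
      all_goals try simp only [map_mul, map_div₀, map_sub, map_neg, conj_conj, Complex.conj_ofReal, map_zero]
      · rw [div_mul_div_comm, div_mul_div_comm,
          div_add_div _ _ (mul_ne_zero hd1c hd1) (mul_ne_zero hd2 hd3),
          ← eq_sub_iff_add_eq, div_eq_iff (mul_ne_zero (mul_ne_zero hd1c hd1) (mul_ne_zero hd2 hd3))]
        linear_combination (b1*conj' b1*((conj' t22 - t11)*(t22 - conj' t11))
          + b2*conj' b2*((conj' t22 - conj' t11)*(t22 - t11))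
          + ((conj' t22 - conj' t11)*(t22 - t11))*((conj' t22 - t11)*(t22 - conj' t11))) * hz1 + hR3
      · field_simp [hd1, hd2, hd3, hd1c, hb1, hb1c]
        ring
      · rw [div_mul_div_comm, ← mul_div_assoc,
          div_eq_div_iff (mul_ne_zero hd2 (mul_ne_zero hb1 hd1c)) hd3]
        linear_combination (-b2) * hz2c + (-(b2*(conj' t22 - t11)*b1*(conj' t22 - conj' t11))) * hz1
      · rw [div_mul_div_comm, div_mul_div_comm, div_mul_div_comm,
          div_add_div _ _ (mul_ne_zero (mul_ne_zero hb1 hd1c) (mul_ne_zero hb1c hd1)) (mul_ne_zero hd1c hd1),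
          div_add_div _ _ (mul_ne_zero (mul_ne_zero (mul_ne_zero hb1 hd1c) (mul_ne_zero hb1c hd1)) (mul_ne_zero hd1c hd1)) (mul_ne_zero hd3 hd2),
          div_eq_iff (mul_ne_zero (mul_ne_zero (mul_ne_zero (mul_ne_zero hb1 hd1c) (mul_ne_zero hb1c hd1)) (mul_ne_zero hd1c hd1)) (mul_ne_zero hd3 hd2))]
        linear_combination (b1*conj' b1*(conj' t22 - conj' t11)*(t22 - t11)*((conj' t22 - conj' t11)*(t22 - t11)*((t22 - conj' t11)*(conj' t22 - t11)) + b1*conj' b1*((t22 - conj' t11)*(conj' t22 - t11)) + (conj' t22 - conj' t11)*(t22 - t11)*b2*conj' b2)) * hz1 + (b1*conj' b1*(conj' t22 - conj' t11)*(t22 - t11)) * hR3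
      · field_simp [hd1, hd2, hd3, hd1c, hb1, hb1c]
        ring
      · field_simp [hd1, hd2, hd3, hd1c, hb1, hb1c]
        ring
      · field_simp [hd1, hd2, hd3, hd1c, hb1, hb1c]
      · field_simp [hd1, hd2, hd3, hd1c, hb1, hb1c]
        linear_combination (-(b2*(t11 - conj' t11))) * hkey
      · field_simp [hd1, hd2, hd3, hd1c, hb1, hb1c]
        ring
      · field_simp [hd1, hd2, hd3, hd1c, hb1, hb1c]
        ring
end
end

section
/- Let χ be a quaternion, let s = (1 + |χ|²)^(−1/2) ∈ ℝ (embedded into ℍ) and c = s·χ, and let G be the 2×2 quaternion matrix with rows (c, −s) and (s, star c). Then G is unitary: Gᴴ·G = I, where Gᴴ is the conjugate transpose. -/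
/-- The Givens-like matrix `G = [[c, -s], [s, star c]]` with
`s = (1 + |χ|²)^(-1/2)` (a real number embedded into ℍ) and `c = s χ` is
unitary: `Gᴴ G = I`. -/
theorem givens_unitary (χ : Quaternion ℝ) (s : ℝ) (c : Quaternion ℝ)
    (hs : s = (1 + ‖χ‖ ^ 2) ^ (-(1 : ℝ) / 2)) (hc : c = (s : Quaternion ℝ) * χ) :
    (!![c, -(s : Quaternion ℝ); (s : Quaternion ℝ), star c]).conjTranspose
      * !![c, -(s : Quaternion ℝ); (s : Quaternion ℝ), star c] = 1 := by
  have hpos : (0:ℝ) < 1 + ‖χ‖ ^ 2 := by positivity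
  have hs2 : s ^ 2 * (1 + ‖χ‖ ^ 2) = 1 := by
    rw [hs, ← Real.rpow_natCast _ 2, ← Real.rpow_mul hpos.le]
    norm_num
    rw [Real.rpow_neg_one]
    field_simp
  have key : Quaternion.normSq c + s * s = 1 := by
    have hnc : Quaternion.normSq c = ‖c‖ * ‖c‖ := Quaternion.normSq_eq_norm_mul_self c
    rw [hnc, hc]
    have h1 : ‖(s : Quaternion ℝ) * χ‖ = |s| * ‖χ‖ := by
      rw [norm_mul, Quaternion.norm_coe, Real.norm_eq_abs]
    rw [h1]
    have habs : |s| * |s| = s ^ 2 := by rw [← abs_mul, sq, abs_mul_self]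
    nlinarith [hs2]
  refine Matrix.ext fun i j => ?_
  fin_cases i <;> fin_cases j <;>
    simp [Matrix.mul_apply, Fin.sum_univ_two, Matrix.one_apply]
  · rw [Quaternion.star_mul_self, ← Quaternion.coe_mul, ← Quaternion.coe_add,
      ← Quaternion.coe_one]
    exact congrArg _ key
  · rw [Quaternion.coe_mul_eq_smul, Quaternion.mul_coe_eq_smul]
    simp
  · rw [Quaternion.coe_mul_eq_smul, Quaternion.mul_coe_eq_smul]
    simp
  · rw [Quaternion.self_mul_star, ← Quaternion.coe_mul, ← Quaternion.coe_add,
      ← Quaternion.coe_one]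
    rw [add_comm] at key
    exact congrArg _ key
end

section
/- Let t₁₁, t₁₂, t₂₂ be quaternions and let χ be a quaternion satisfying t₁₁·χ − χ·t₂₂ = −t₁₂. Set s = (1 + |χ|²)^(−1/2) ∈ ℝ (embedded into ℍ), c = s·χ, and let G be the 2×2 quaternion matrix with rows (c, −s) and (s, star c), and T the 2×2 matrix with rows (t₁₁, t₁₂) and (0, t₂₂). Then Gᴴ·T·G is the upper triangular matrix with rows (t₂₂, t₂₂·(star χ) − (star χ)·t₁₁) and (0, t₁₁). -/
open Quaternion in
/-- Eigenvalue swapping with the Givens-like matrix: if `t₁₁ χ - χ t₂₂ = -t₁₂`,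
`s = (1 + |χ|²)^(-1/2)`, `c = s χ`, `G = [[c, -s], [s, star c]]`, and
`T = [[t₁₁, t₁₂], [0, t₂₂]]`, then
`Gᴴ T G = [[t₂₂, t₂₂ (star χ) - (star χ) t₁₁], [0, t₁₁]]`. -/
theorem givens_swap (t11 t12 t22 χ : Quaternion ℝ)
    (h : t11 * χ - χ * t22 = -t12)
    (s : ℝ) (c : Quaternion ℝ)
    (hs : s = (1 + ‖χ‖ ^ 2) ^ (-(1 : ℝ) / 2)) (hc : c = (s : Quaternion ℝ) * χ) :
    (!![c, -(s : Quaternion ℝ); (s : Quaternion ℝ), star c]).conjTranspose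
        * !![t11, t12; 0, t22]
        * !![c, -(s : Quaternion ℝ); (s : Quaternion ℝ), star c]
      = !![t22, t22 * star χ - star χ * t11; 0, t11] := by
  have ht12 : t12 = χ * t22 - t11 * χ := by
    have := congrArg Neg.neg h; simpa [neg_sub, eq_comm] using this
  have hpos : (0:ℝ) < 1 + ‖χ‖ ^ 2 := by positivity
  have hs2 : s * s = (1 + ‖χ‖ ^ 2)⁻¹ := by
    rw [hs, ← Real.rpow_add hpos, ← Real.rpow_neg_one]
    norm_num
  have hs1 : s ^ 2 * (1 + ‖χ‖ ^ 2) = 1 := by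
    rw [sq, hs2, inv_mul_cancel₀ hpos.ne']
  have hm : star χ * χ = ((‖χ‖ ^ 2 : ℝ) : Quaternion ℝ) := by
    rw [star_mul_self, normSq_eq_norm_mul_self, ← sq]
  have hm' : χ * star χ = ((‖χ‖ ^ 2 : ℝ) : Quaternion ℝ) := by
    rw [self_mul_star, normSq_eq_norm_mul_self, ← sq]
  have h1 : ∀ a : Quaternion ℝ, star χ * (χ * a) = (‖χ‖ ^ 2) • a := by
    intro a; rw [← mul_assoc, hm, coe_mul_eq_smul]
  have h2 : ∀ a : Quaternion ℝ, χ * (star χ * a) = (‖χ‖ ^ 2) • a := by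
    intro a; rw [← mul_assoc, hm', coe_mul_eq_smul]
  have hG : (!![c, -(s : Quaternion ℝ); (s : Quaternion ℝ), star c]).conjTranspose
      = !![star c, (s : Quaternion ℝ); -(s : Quaternion ℝ), c] := by
    refine Matrix.ext fun i j => ?_
    fin_cases i <;> fin_cases j <;>
      simp [Matrix.conjTranspose_apply]
  rw [hG, Matrix.mul_fin_two, Matrix.mul_fin_two]
  subst ht12 hc
  refine Matrix.ext fun i j => ?_
  fin_cases i <;> fin_cases j <;>
    simp only [Matrix.cons_val', Matrix.cons_val_zero, Matrix.cons_val_one, Matrix.head_cons,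
      Matrix.head_fin_const, Matrix.empty_val', Matrix.cons_val_fin_one, Fin.isValue,
      Fin.mk_zero, Fin.mk_one, Matrix.of_apply, star_mul, star_coe, star_star, star_neg] <;>
    simp only [mul_sub, sub_mul, mul_add, add_mul, mul_assoc, neg_mul,
      mul_neg, zero_mul, mul_zero, add_zero, zero_add, hm, hm', h1, h2,
      coe_mul_eq_smul, mul_coe_eq_smul, smul_mul_assoc, mul_smul_comm, smul_smul,
      smul_sub, smul_add, smul_neg, neg_smul] <;>
    match_scalars
  all_goals (first | ring1 | linear_combination hs1 | linear_combination -hs1)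
end

section
/- Let T be an n×n upper triangular quaternion matrix whose diagonal entries are complex numbers with nonnegative imaginary parts (regarded as quaternions), and let σ be any permutation of the index set. Then there exists a unitary n×n quaternion matrix Q such that S = Qᴴ·T·Q is upper triangular and S i i = T (σ i) (σ i) for all i; that is, the diagonal entries of an upper triangular Schur form can be reordered into any prescribed ordering by a unitary similarity that preserves upper triangularity. -/
noncomputable def jq : Quaternion ℝ := ⟨0, 0, 1, 0⟩
@[simp] lemma cq_re (z : ℂ) : (cq z).re = z.re := rfl
@[simp] lemma cq_imI (z : ℂ) : (cq z).imI = z.im := rfl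
@[simp] lemma cq_imJ (z : ℂ) : (cq z).imJ = 0 := rfl
@[simp] lemma cq_imK (z : ℂ) : (cq z).imK = 0 := rfl
lemma cq_mul (z w : ℂ) : cq (z * w) = cq z * cq w := by
  ext <;> simp [Quaternion.re_mul, Quaternion.imI_mul, Quaternion.imJ_mul,
    Quaternion.imK_mul, Complex.mul_re, Complex.mul_im]
lemma cq_sub (z w : ℂ) : cq (z - w) = cq z - cq w := by ext <;> simp
lemma jq_mul_cq (z : ℂ) : jq * cq z = cq (starRingEnd ℂ z) * jq := by
  ext <;> simp only [Quaternion.re_mul, Quaternion.imI_mul, Quaternion.imJ_mul,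
    Quaternion.imK_mul] <;> simp [jq]
lemma quat_decomp (b : Quaternion ℝ) :
    b = cq ⟨b.re, b.imI⟩ + cq ⟨b.imJ, b.imK⟩ * jq := by
  ext <;> simp [Quaternion.re_mul, Quaternion.imI_mul, Quaternion.imJ_mul,
    Quaternion.imK_mul] <;> simp [jq]

lemma conj_sub_ne {α γ : ℂ} (hne : α ≠ γ) (hα : 0 ≤ α.im) (hγ : 0 ≤ γ.im) :
    starRingEnd ℂ γ - α ≠ 0 := by
  intro h
  have h' : starRingEnd ℂ γ = α := by linear_combination h
  have him : γ.im = 0 := by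
    have := congrArg Complex.im h'
    simp [Complex.conj_im] at this
    linarith
  apply hne
  rw [← h']
  apply Complex.ext <;> simp [Complex.conj_im, him]

lemma sylvester {α γ : ℂ} (h1 : γ - α ≠ 0) (h2 : starRingEnd ℂ γ - α ≠ 0)
    (b : Quaternion ℝ) : ∃ x1 : Quaternion ℝ, x1 * cq γ - cq α * x1 = b := by
  set z1 : ℂ := ⟨b.re, b.imI⟩ / (γ - α) with hz1
  set z2 : ℂ := ⟨b.imJ, b.imK⟩ / (starRingEnd ℂ γ - α) with hz2
  refine ⟨cq z1 + cq z2 * jq, ?_⟩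
  have e : (cq z1 + cq z2 * jq) * cq γ - cq α * (cq z1 + cq z2 * jq)
      = cq (z1 * γ - α * z1) + cq (z2 * starRingEnd ℂ γ - α * z2) * jq := by
    rw [cq_sub, cq_sub, cq_mul, cq_mul, cq_mul, cq_mul, add_mul, mul_add,
      mul_assoc (cq z2) jq (cq γ), jq_mul_cq]
    noncomm_ring
  rw [e]
  have k1 : z1 * γ - α * z1 = ⟨b.re, b.imI⟩ := by
    rw [hz1]; field_simp
  have k2 : z2 * starRingEnd ℂ γ - α * z2 = ⟨b.imJ, b.imK⟩ := by
    rw [hz2]; field_simp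
  rw [k1, k2, ← quat_decomp]

noncomputable def blk {n : ℕ} (k k' : Fin n) (p : Quaternion ℝ) (s : ℝ) :
    Matrix (Fin n) (Fin n) (Quaternion ℝ) := fun i j =>
  if i = k then (if j = k then p else if j = k' then -(s : Quaternion ℝ) else 0)
  else if i = k' then (if j = k then (s : Quaternion ℝ) else if j = k' then star p else 0)
  else if i = j then 1 else 0

lemma blk_apply_other {n : ℕ} {k k' : Fin n} {p : Quaternion ℝ} {s : ℝ} {i j : Fin n}
    (h1 : i ≠ k) (h2 : i ≠ k') :
    blk k k' p s i j = if i = j then 1 else 0 := by simp [blk, h1, h2]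

lemma mul_blk {n : ℕ} {k k' : Fin n} (hkk' : k ≠ k') (p : Quaternion ℝ) (s : ℝ)
    (M : Matrix (Fin n) (Fin n) (Quaternion ℝ)) (i j : Fin n) :
    (M * blk k k' p s) i j =
      M i k * blk k k' p s k j + M i k' * blk k k' p s k' j +
      if j = k ∨ j = k' then 0 else M i j := by
  rw [Matrix.mul_apply]
  have hsplit : (Finset.univ : Finset (Fin n)) = {k, k'} ∪ (Finset.univ \ {k, k'}) := by
    rw [Finset.union_sdiff_of_subset (Finset.subset_univ _)]
  rw [hsplit, Finset.sum_union Finset.disjoint_sdiff, Finset.sum_pair hkk']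
  congr 1
  have hc : ∀ l ∈ Finset.univ \ ({k, k'} : Finset (Fin n)),
      M i l * blk k k' p s l j = if l = j then M i j else 0 := by
    intro l hl
    simp only [Finset.mem_sdiff, Finset.mem_insert, Finset.mem_singleton] at hl
    push_neg at hl
    rw [blk_apply_other hl.2.1 hl.2.2]
    split_ifs with h
    · subst h; rw [mul_one]
    · rw [mul_zero]
  rw [Finset.sum_congr rfl hc, Finset.sum_ite_eq' _ j]
  by_cases h : j = k ∨ j = k' <;> simp [h]

lemma blkH_mul {n : ℕ} {k k' : Fin n} (hkk' : k ≠ k') (p : Quaternion ℝ) (s : ℝ)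
    (M : Matrix (Fin n) (Fin n) (Quaternion ℝ)) (i j : Fin n) :
    ((blk k k' p s).conjTranspose * M) i j =
      star (blk k k' p s k i) * M k j + star (blk k k' p s k' i) * M k' j +
      if i = k ∨ i = k' then 0 else M i j := by
  rw [Matrix.mul_apply]
  simp only [Matrix.conjTranspose_apply]
  have hsplit : (Finset.univ : Finset (Fin n)) = {k, k'} ∪ (Finset.univ \ {k, k'}) := by
    rw [Finset.union_sdiff_of_subset (Finset.subset_univ _)]
  rw [hsplit, Finset.sum_union Finset.disjoint_sdiff, Finset.sum_pair hkk']
  congr 1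
  have hc : ∀ l ∈ Finset.univ \ ({k, k'} : Finset (Fin n)),
      star (blk k k' p s l i) * M l j = if l = i then M i j else 0 := by
    intro l hl
    simp only [Finset.mem_sdiff, Finset.mem_insert, Finset.mem_singleton] at hl
    push_neg at hl
    rw [blk_apply_other hl.2.1 hl.2.2]
    split_ifs with h
    · subst h; rw [star_one, one_mul]
    · rw [star_zero, zero_mul]
  rw [Finset.sum_congr rfl hc, Finset.sum_ite_eq' _ i]
  by_cases h : i = k ∨ i = k' <;> simp [h]

lemma trick1 (p q : Quaternion ℝ) (s : ℝ)
    (h1 : star p * p + (s : Quaternion ℝ) * s + 0 = 1) :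
    star p * (p * q) + (s : Quaternion ℝ) * (q * s) + 0 = q := by
  calc star p * (p * q) + (s : Quaternion ℝ) * (q * s) + 0
      = star p * p * q + (s : Quaternion ℝ) * q * s := by noncomm_ring
    _ = star p * p * q + q * (s : Quaternion ℝ) * s := by
        rw [Quaternion.coe_commutes s q]
    _ = star p * p * q + q * ((s : Quaternion ℝ) * s) := by rw [mul_assoc q]
    _ = star p * p * q + q * ((s * s : ℝ) : Quaternion ℝ) := by
        rw [Quaternion.coe_mul]
    _ = star p * p * q + ((s * s : ℝ) : Quaternion ℝ) * q := by
        rw [← Quaternion.coe_commutes]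
    _ = (star p * p + (s : Quaternion ℝ) * s + 0) * q := by
        rw [Quaternion.coe_mul]; noncomm_ring
    _ = q := by rw [h1, one_mul]

lemma trick2 (a b q p : Quaternion ℝ) (s : ℝ)
    (h3 : p * q = a * p + b * s) :
    -(s : Quaternion ℝ) * (a * p + b * s) + p * (q * s) + 0 = 0 := by
  calc -(s : Quaternion ℝ) * (a * p + b * s) + p * (q * s) + 0
      = -((s : Quaternion ℝ) * (a * p + b * s)) + p * q * s := by noncomm_ring
    _ = -((a * p + b * (s : Quaternion ℝ)) * s) + (a * p + b * s) * s := by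
        rw [Quaternion.coe_commutes, h3]
    _ = 0 := by noncomm_ring

lemma trick3 (a b q p : Quaternion ℝ) (s : ℝ)
    (h3 : p * q = a * p + b * s)
    (h2 : (s : Quaternion ℝ) * s + p * star p = 1) :
    -(s : Quaternion ℝ) * (a * -(s : Quaternion ℝ) + b * star p) + p * (q * star p) + 0
      = a := by
  calc -(s : Quaternion ℝ) * (a * -(s : Quaternion ℝ) + b * star p) + p * (q * star p) + 0
      = (s : Quaternion ℝ) * a * s - (s : Quaternion ℝ) * (b * star p)
          + p * q * star p := by noncomm_ring
    _ = a * ((s : Quaternion ℝ) * s) - (s : Quaternion ℝ) * b * star p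
          + (a * p + b * s) * star p := by
        rw [Quaternion.coe_commutes s a, h3, mul_assoc a, mul_assoc]
    _ = a * ((s : Quaternion ℝ) * s) - b * (s : Quaternion ℝ) * star p
          + (a * p + b * s) * star p := by rw [Quaternion.coe_commutes s b]
    _ = a * ((s : Quaternion ℝ) * s + p * star p) := by noncomm_ring
    _ = a := by rw [h2, mul_one]

open Quaternion in
lemma swap_step {n : ℕ} (T : Matrix (Fin n) (Fin n) (Quaternion ℝ))
    (hupper : ∀ i j, j < i → T i j = 0)
    (d : Fin n → ℂ) (hd : ∀ i, T i i = cq (d i)) (him : ∀ i, 0 ≤ (d i).im)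
    (k : Fin n) (hk : (k : ℕ) + 1 < n) :
    ∃ Q : Matrix (Fin n) (Fin n) (Quaternion ℝ),
      Q.conjTranspose * Q = 1 ∧
      (∀ i j, j < i → (Q.conjTranspose * T * Q) i j = 0) ∧
      (∀ i, (Q.conjTranspose * T * Q) i i =
        T (Equiv.swap k ⟨(k : ℕ) + 1, hk⟩ i) (Equiv.swap k ⟨(k : ℕ) + 1, hk⟩ i)) := by
  set k' : Fin n := ⟨(k : ℕ) + 1, hk⟩ with hk'def
  have hkk' : k ≠ k' := by
    intro h; have := congrArg Fin.val h; simp [hk'def] at this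
  have hklt : k < k' := by rw [Fin.lt_def]; simp [hk'def]
  have hgap : ∀ i : Fin n, k < i → i ≠ k' → k' < i := by
    intro i hki hik'
    have h3 : (i : ℕ) ≠ (k' : ℕ) := fun hh => hik' (Fin.ext hh)
    rw [Fin.lt_def] at *
    simp only [hk'def] at *
    omega
  by_cases hac : d k = d k'
  · refine ⟨1, by simp, ?_, ?_⟩
    · intro i j hj
      simpa using hupper i j hj
    · intro i
      simp only [Matrix.conjTranspose_one, Matrix.one_mul, Matrix.mul_one]
      rcases eq_or_ne i k with rfl | hik
      · rw [Equiv.swap_apply_left, hd, hd, hac]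
      rcases eq_or_ne i k' with rfl | hik'
      · rw [Equiv.swap_apply_right, hd, hd, hac]
      · rw [Equiv.swap_apply_of_ne_of_ne hik hik']
  · -- main case : distinct diagonal entries
    have h1 : d k' - d k ≠ 0 := sub_ne_zero.mpr (Ne.symm hac)
    have h2 : starRingEnd ℂ (d k') - d k ≠ 0 := conj_sub_ne hac (him k) (him k')
    obtain ⟨x1, hx1⟩ := sylvester h1 h2 (T k k')
    have hx1' : x1 * T k' k' = T k k' + T k k * x1 := by
      rw [hd k', hd k]
      exact sub_eq_iff_eq_add.mp hx1
    set N : ℝ := Quaternion.normSq x1 with hN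
    have hNnn : (0:ℝ) ≤ N := Quaternion.normSq_nonneg
    have hNpos : (0:ℝ) < 1 + N := by linarith
    set s : ℝ := (Real.sqrt (1 + N))⁻¹ with hsdef
    have hsqrt : Real.sqrt (1 + N) ≠ 0 := by positivity
    have hs : s * s * (1 + N) = 1 := by
      have hss : Real.sqrt (1 + N) * Real.sqrt (1 + N) = 1 + N :=
        Real.mul_self_sqrt hNpos.le
      rw [hsdef, ← hss]
      field_simp
      rw [Real.sq_sqrt hNpos.le, Real.sq_sqrt hNpos.le]
    set p : Quaternion ℝ := x1 * (s : Quaternion ℝ) with hp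
    have hcs : ∀ q : Quaternion ℝ, ((s : Quaternion ℝ)) * q = q * (s : Quaternion ℝ) :=
      fun q => Quaternion.coe_commutes s q
    have hstarp : star p = (s : Quaternion ℝ) * star x1 := by
      rw [hp, star_mul, Quaternion.star_coe]
    have hreal : s * s * N + s * s = 1 := by nlinarith [hs]
    have f1 : star p * p + (s : Quaternion ℝ) * s + 0 = 1 := by
      have e : star p * p = ((s * s * N : ℝ) : Quaternion ℝ) := by
        rw [hstarp, hp]
        calc (s : Quaternion ℝ) * star x1 * (x1 * s)
            = (s : Quaternion ℝ) * (star x1 * x1) * s := by noncomm_ring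
          _ = (s : Quaternion ℝ) * ((N : ℝ) : Quaternion ℝ) * s := by
              rw [Quaternion.star_mul_self, hN]
          _ = ((s * N * s : ℝ) : Quaternion ℝ) := by
              rw [← Quaternion.coe_mul, ← Quaternion.coe_mul]
          _ = _ := congrArg _ (by ring)
      rw [e, add_zero, ← Quaternion.coe_mul, ← Quaternion.coe_add, hreal, Quaternion.coe_one]
    have f2 : (s : Quaternion ℝ) * s + p * star p = 1 := by
      have e : p * star p = ((s * s * N : ℝ) : Quaternion ℝ) := by
        rw [hstarp, hp]
        calc x1 * (s : Quaternion ℝ) * ((s : Quaternion ℝ) * star x1)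
            = x1 * ((s : Quaternion ℝ) * s) * star x1 := by noncomm_ring
          _ = x1 * ((s * s : ℝ) : Quaternion ℝ) * star x1 := by rw [Quaternion.coe_mul]
          _ = x1 * star x1 * ((s * s : ℝ) : Quaternion ℝ) := by
              rw [mul_assoc, Quaternion.coe_commutes, ← mul_assoc]
          _ = ((N : ℝ) : Quaternion ℝ) * ((s * s : ℝ) : Quaternion ℝ) := by
              rw [Quaternion.self_mul_star, hN]
          _ = _ := by rw [← Quaternion.coe_mul]; exact congrArg _ (by ring)
      rw [e, ← Quaternion.coe_mul, ← Quaternion.coe_add]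
      rw [show s * s + s * s * N = 1 by linarith [hreal], Quaternion.coe_one]
    have f3 : p * T k' k' = T k k * p + T k k' * (s : Quaternion ℝ) := by
      rw [hp, mul_assoc, hcs (T k' k'), ← mul_assoc, hx1', add_mul, mul_assoc]
      abel
    -- entries of the block unitary
    have hQkk : blk k k' p s k k = p := by simp [blk]
    have hQkk' : blk k k' p s k k' = -(s : Quaternion ℝ) := by simp [blk, hkk'.symm]
    have hQk'k : blk k k' p s k' k = (s : Quaternion ℝ) := by simp [blk, hkk'.symm]
    have hQk'k' : blk k k' p s k' k' = star p := by simp [blk, hkk'.symm]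
    have hQko : ∀ j, j ≠ k → j ≠ k' → blk k k' p s k j = 0 := by
      intro j hj1 hj2; simp [blk, hj1, hj2]
    have hQk'o : ∀ j, j ≠ k → j ≠ k' → blk k k' p s k' j = 0 := by
      intro j hj1 hj2; simp [blk, hkk'.symm, hj1, hj2]
    have hTk'k : T k' k = 0 := hupper k' k hklt
    have hR := mul_blk hkk' p s T
    have hRkk : (T * blk k k' p s) k k = T k k * p + T k k' * (s : Quaternion ℝ) := by
      rw [hR, hQkk, hQk'k, if_pos (Or.inl rfl), add_zero]
    have hRk'k : (T * blk k k' p s) k' k = T k' k' * (s : Quaternion ℝ) := by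
      rw [hR, hQkk, hQk'k, if_pos (Or.inl rfl), hTk'k, zero_mul, zero_add, add_zero]
    have hRkk' : (T * blk k k' p s) k k' =
        T k k * (-(s : Quaternion ℝ)) + T k k' * star p := by
      rw [hR, hQkk', hQk'k', if_pos (Or.inr rfl), add_zero]
    have hRk'k' : (T * blk k k' p s) k' k' = T k' k' * star p := by
      rw [hR, hQkk', hQk'k', if_pos (Or.inr rfl), hTk'k, zero_mul, zero_add, add_zero]
    refine ⟨blk k k' p s, ?_, ?_, ?_⟩
    · -- unitarity
      refine Matrix.ext fun i j => ?_
      rw [blkH_mul hkk']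
      rcases eq_or_ne k i with rfl | hik
      · rcases eq_or_ne k j with rfl | hjk
        · rw [hQkk, hQk'k, if_pos (Or.inl rfl), Matrix.one_apply_eq, Quaternion.star_coe, f1]
        rcases eq_or_ne k' j with rfl | hjk'
        · rw [hQkk, hQk'k, hQkk', hQk'k', if_pos (Or.inl rfl), Matrix.one_apply_ne hkk',
            Quaternion.star_coe, hcs (star p), mul_neg]
          abel
        · rw [hQko j (Ne.symm hjk) (Ne.symm hjk'), hQk'o j (Ne.symm hjk) (Ne.symm hjk'),
            if_pos (Or.inl rfl), mul_zero, mul_zero, add_zero, add_zero,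
            Matrix.one_apply_ne hjk]
      rcases eq_or_ne k' i with rfl | hik'
      · rcases eq_or_ne k j with rfl | hjk
        · rw [hQkk', hQk'k', hQkk, hQk'k, if_pos (Or.inr rfl),
            Matrix.one_apply_ne (Ne.symm hkk'), star_neg, Quaternion.star_coe, star_star,
            neg_mul, hcs p]
          abel
        rcases eq_or_ne k' j with rfl | hjk'
        · rw [hQkk', hQk'k', if_pos (Or.inr rfl), Matrix.one_apply_eq, star_neg,
            Quaternion.star_coe, star_star, neg_mul, mul_neg, neg_neg, add_zero, f2]
        · rw [hQko j (Ne.symm hjk) (Ne.symm hjk'), hQk'o j (Ne.symm hjk) (Ne.symm hjk'),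
            if_pos (Or.inr rfl), mul_zero, mul_zero, add_zero, add_zero,
            Matrix.one_apply_ne hjk']
      · rw [hQko i (Ne.symm hik) (Ne.symm hik'), hQk'o i (Ne.symm hik) (Ne.symm hik'),
          star_zero, zero_mul, zero_mul,
          if_neg (not_or.mpr ⟨Ne.symm hik, Ne.symm hik'⟩), zero_add, zero_add,
          blk_apply_other (Ne.symm hik) (Ne.symm hik'), Matrix.one_apply]
    · -- triangularity
      intro i j hji
      rw [Matrix.mul_assoc, blkH_mul hkk']
      rcases eq_or_ne k i with rfl | hik
      · have hjk : j ≠ k := ne_of_lt hji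
        have hjk' : j ≠ k' := ne_of_lt (hji.trans hklt)
        simp [hR, hQko j hjk hjk', hQk'o j hjk hjk', hjk, hjk',
          hupper k j hji, hupper k' j (hji.trans hklt)]
      rcases eq_or_ne k' i with rfl | hik'
      · rcases eq_or_ne k j with rfl | hjk
        · rw [if_pos (Or.inr rfl), hQkk', hQk'k', star_neg, Quaternion.star_coe, star_star,
            hRkk, hRk'k]
          exact trick2 (T k k) (T k k') (T k' k') p s f3
        · have hjk' : j ≠ k' := ne_of_lt hji
          have hjlt : j < k := by
            rcases lt_or_ge j k with h | h
            · exact h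
            · exact absurd (hgap j (lt_of_le_of_ne h hjk) hjk') (not_lt.mpr hji.le)
          simp [hR, hQko j (Ne.symm hjk) hjk', hQk'o j (Ne.symm hjk) hjk', Ne.symm hjk, hjk',
            hupper k j hjlt, hupper k' j hji]
      · have h5 : i ≠ k := Ne.symm hik
        have h6 : i ≠ k' := Ne.symm hik'
        rw [hQko i h5 h6, hQk'o i h5 h6, star_zero, zero_mul, zero_mul,
          if_neg (not_or.mpr ⟨h5, h6⟩), zero_add, zero_add, hR]
        rcases eq_or_ne k j with rfl | hjk
        · simp [hQkk, hQk'k, hupper i k hji, hupper i k' (hgap i hji h6)]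
        rcases eq_or_ne k' j with rfl | hjk'
        · simp [hQkk', hQk'k', hupper i k (hklt.trans hji), hupper i k' hji]
        · simp [hQko j (Ne.symm hjk) (Ne.symm hjk'), hQk'o j (Ne.symm hjk) (Ne.symm hjk'),
            Ne.symm hjk, Ne.symm hjk', hupper i j hji]
    · -- diagonal entries
      intro i
      rw [Matrix.mul_assoc, blkH_mul hkk']
      rcases eq_or_ne k i with rfl | hik
      · rw [if_pos (Or.inl rfl), hQkk, hQk'k, Quaternion.star_coe, hRkk, hRk'k, ← f3,
          Equiv.swap_apply_left]
        exact trick1 p (T k' k') s f1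
      rcases eq_or_ne k' i with rfl | hik'
      · rw [if_pos (Or.inr rfl), hQkk', hQk'k', star_neg, Quaternion.star_coe, star_star,
          hRkk', hRk'k', Equiv.swap_apply_right]
        exact trick3 (T k k) (T k k') (T k' k') p s f3 f2
      · have h5 : i ≠ k := Ne.symm hik
        have h6 : i ≠ k' := Ne.symm hik'
        rw [hQko i h5 h6, hQk'o i h5 h6, star_zero, zero_mul, zero_mul,
          if_neg (not_or.mpr ⟨h5, h6⟩), zero_add, zero_add, hR, hQko i h5 h6,
          hQk'o i h5 h6, if_neg (not_or.mpr ⟨h5, h6⟩), mul_zero, mul_zero,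
          zero_add, zero_add, Equiv.swap_apply_of_ne_of_ne h5 h6]

/-- The statement for a fixed permutation, quantified over all standardized
upper triangular matrices. -/
def GoodPerm {n : ℕ} (σ : Equiv.Perm (Fin n)) : Prop :=
  ∀ (T : Matrix (Fin n) (Fin n) (Quaternion ℝ)),
    (∀ i j, j < i → T i j = 0) →
    ∀ (d : Fin n → ℂ), (∀ i, T i i = cq (d i)) → (∀ i, 0 ≤ (d i).im) →
    ∃ Q : Matrix (Fin n) (Fin n) (Quaternion ℝ),
      Q.conjTranspose * Q = 1 ∧
      (∀ i j, j < i → (Q.conjTranspose * T * Q) i j = 0) ∧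
      (∀ i, (Q.conjTranspose * T * Q) i i = T (σ i) (σ i))

lemma goodPerm_one {n : ℕ} : GoodPerm (1 : Equiv.Perm (Fin n)) := by
  intro T hupper d hd him
  refine ⟨1, by simp, ?_, ?_⟩
  · intro i j hj; simpa using hupper i j hj
  · intro i; simp

lemma goodPerm_mul {n : ℕ} {σ τ : Equiv.Perm (Fin n)}
    (hσ : GoodPerm σ) (hτ : GoodPerm τ) : GoodPerm (σ * τ) := by
  intro T hupper d hd him
  obtain ⟨Q1, hQ1u, hQ1t, hQ1d⟩ := hσ T hupper d hd him
  set S1 := Q1.conjTranspose * T * Q1 with hS1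
  have hS1d : ∀ i, S1 i i = cq (d (σ i)) := fun i => by rw [hQ1d i, hd]
  obtain ⟨Q2, hQ2u, hQ2t, hQ2d⟩ := hτ S1 hQ1t (fun i => d (σ i)) hS1d (fun i => him (σ i))
  refine ⟨Q1 * Q2, ?_, ?_, ?_⟩
  · rw [Matrix.conjTranspose_mul, Matrix.mul_assoc, ← Matrix.mul_assoc Q1.conjTranspose,
      hQ1u, Matrix.one_mul, hQ2u]
  · have he : (Q1 * Q2).conjTranspose * T * (Q1 * Q2) = Q2.conjTranspose * S1 * Q2 := by
      rw [hS1, Matrix.conjTranspose_mul]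
      noncomm_ring
    rw [he]
    exact hQ2t
  · intro i
    have he : (Q1 * Q2).conjTranspose * T * (Q1 * Q2) = Q2.conjTranspose * S1 * Q2 := by
      rw [hS1, Matrix.conjTranspose_mul]
      noncomm_ring
    rw [he, hQ2d i, hQ1d (τ i), Equiv.Perm.mul_apply]

lemma goodPerm_all {n : ℕ} (σ : Equiv.Perm (Fin n)) : GoodPerm σ := by
  cases n with
  | zero =>
    intro T hupper d hd him
    exact ⟨1, Subsingleton.elim _ _, fun i => i.elim0, fun i => i.elim0⟩
  | succ m =>
    have hσ : σ ∈ Submonoid.closure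
        (Set.range fun i : Fin m => Equiv.swap i.castSucc i.succ) := by
      rw [Equiv.Perm.mclosure_swap_castSucc_succ]
      trivial
    refine Submonoid.closure_induction ?_ goodPerm_one
      (fun x y _ _ hx hy => goodPerm_mul hx hy) hσ
    rintro x ⟨i, rfl⟩
    intro T hupper d hd him
    have hk : ((i.castSucc : Fin (m + 1)) : ℕ) + 1 < m + 1 := by
      simp
    have hsucc : (⟨((i.castSucc : Fin (m + 1)) : ℕ) + 1, hk⟩ : Fin (m + 1)) = i.succ := by
      apply Fin.ext
      simp
    obtain ⟨Q, hu, ht, hdg⟩ := swap_step T hupper d hd him i.castSucc hk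
    rw [hsucc] at hdg
    exact ⟨Q, hu, ht, hdg⟩

/-- The diagonal entries of an upper triangular quaternion Schur form, assumed
to be standardized complex numbers (nonnegative imaginary parts), can be
reordered into any prescribed ordering `σ` by a unitary similarity preserving
upper triangularity. -/
theorem schur_reorder {n : ℕ} (T : Matrix (Fin n) (Fin n) (Quaternion ℝ))
    (hupper : ∀ i j, j < i → T i j = 0)
    (d : Fin n → ℂ) (hd : ∀ i, T i i = cq (d i)) (him : ∀ i, 0 ≤ (d i).im)
    (σ : Equiv.Perm (Fin n)) :
    ∃ Q : Matrix (Fin n) (Fin n) (Quaternion ℝ),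
      Q.conjTranspose * Q = 1 ∧
      (∀ i j, j < i → (Q.conjTranspose * T * Q) i j = 0) ∧
      (∀ i, (Q.conjTranspose * T * Q) i i = T (σ i) (σ i)) := by
  exact goodPerm_all σ T hupper d hd him
end
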